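/- Let Ω ⊆ ℝ³ be an open set and ω ∈ ℂ with ω ≠ 0. Let ε, μ : Ω → ℂ^{3×3} be of class C¹, E, H : Ω → ℂ³ of class C¹, J_e : Ω → ℂ³ of class C¹ and J_m : Ω → ℂ³ continuous, and assume the time-harmonic Maxwell system holds pointwise on Ω: curl H = iωεE + J_e and curl E = −iωμH + J_m. Then for every k ∈ {1,2,3} and every compactly supported test function φ ∈ C²_c(Ω;ℂ) there holds the very weak identity ∫_Ω E_k div(εᵀ ∇φ̄) dx = ∫_Ω ((∂_k ε)E − ε(e_k × (J_m − iωμH)) − (i/ω) e_k div J_e) · ∇φ̄ dx, where φ̄ denotes the complex conjugate of φ, dx is Lebesgue measure on ℝ³ and a·b = Σ_j a_j b_j (no conjugation). -/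

import Mathlib

open Matrix MeasureTheory

noncomputable section

/-- Partial derivative of a scalar function in the j-th coordinate direction. -/
def pd3 (j : Fin 3) (f : (Fin 3 → ℝ) → ℂ) (x : Fin 3 → ℝ) : ℂ :=
  fderiv ℝ f x (Pi.single j 1)

/-- Divergence of a vector field. -/
def vdiv (F : (Fin 3 → ℝ) → Fin 3 → ℂ) (x : Fin 3 → ℝ) : ℂ :=
  ∑ j : Fin 3, pd3 j (fun y => F y j) x

/-- Curl of a vector field. -/
def vcurl (F : (Fin 3 → ℝ) → Fin 3 → ℂ) (x : Fin 3 → ℝ) : Fin 3 → ℂ :=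
  ![pd3 1 (fun y => F y 2) x - pd3 2 (fun y => F y 1) x,
    pd3 2 (fun y => F y 0) x - pd3 0 (fun y => F y 2) x,
    pd3 0 (fun y => F y 1) x - pd3 1 (fun y => F y 0) x]

/-- Gradient of a scalar function. -/
def grad3 (u : (Fin 3 → ℝ) → ℂ) (x : Fin 3 → ℝ) : Fin 3 → ℂ := fun j => pd3 j u x

/-- Cross product on ℂ³. -/
def cross3 (a b : Fin 3 → ℂ) : Fin 3 → ℂ :=
  ![a 1 * b 2 - a 2 * b 1, a 2 * b 0 - a 0 * b 2, a 0 * b 1 - a 1 * b 0]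

/-- The k-th standard basis vector of ℝ³ viewed in ℂ³. -/
def e3 (k : Fin 3) : Fin 3 → ℂ := Pi.single k 1

/-- Entrywise partial derivative of a matrix field in the k-th direction. -/
def mpd3 (k : Fin 3) (a : (Fin 3 → ℝ) → Matrix (Fin 3) (Fin 3) ℂ) (x : Fin 3 → ℝ) :
    Matrix (Fin 3) (Fin 3) ℂ :=
  Matrix.of fun i j => pd3 k (fun y => a y i j) x


/-!
Test against `ψ = conj φ` and integrate by parts: `∫ E_k div(εᵀ∇ψ) = -∫ ∇E_k · εᵀ∇ψ`.
Pointwise, `∇E_k = ∂_k E + e_k × curl E` and `ε ∂_k E = ∂_k(εE) - (∂_k ε) E`, so the integrand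
becomes `((∂_k ε) E - ε (e_k × curl E)) · ∇ψ - ∂_k(εE) · ∇ψ`. Moving `∂_k` onto `ψ` and back
with `∂_j` (the Hessian of `ψ` is symmetric) turns `∫ ∂_k(εE) · ∇ψ` into `∫ div(εE) ∂_k ψ`.
Finally `curl E = J_m - iωμH` by the second Maxwell equation, and the divergence of the first one
gives `div(εE) = (i/ω) div J_e`. Since `H` is only `C¹`, the identity `div curl H = 0` behind the
last step is obtained weakly, from `∫ ∇u · curl H = 0` for test functions `u`, hence only almost
everywhere, which is enough under the integral.
-/

section Integrability

variable {X R : Type*} [TopologicalSpace X] [T2Space X] [MeasurableSpace X]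
  [OpensMeasurableSpace X] {μ : Measure X} [IsFiniteMeasureOnCompacts μ] [NormedRing R]
  {Ω : Set X} {f g : X → R}

theorem HasCompactSupport.integrable_mul_left (hgc : HasCompactSupport g) (hgΩ : tsupport g ⊆ Ω)
    (hf : ContinuousOn f Ω) (hg : ContinuousOn g Ω) : Integrable (fun x => f x * g x) μ :=
  ((hf.mul hg).mono hgΩ |>.integrableOn_compact hgc).integrable_of_forall_notMem_eq_zero
    fun x hx => by simp [image_eq_zero_of_notMem_tsupport hx]

theorem HasCompactSupport.integrable_mul_right (hfc : HasCompactSupport f) (hfΩ : tsupport f ⊆ Ω)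
    (hf : ContinuousOn f Ω) (hg : ContinuousOn g Ω) : Integrable (fun x => f x * g x) μ :=
  ((hf.mul hg).mono hfΩ |>.integrableOn_compact hfc).integrable_of_forall_notMem_eq_zero
    fun x hx => by simp [image_eq_zero_of_notMem_tsupport hx]

end Integrability

section Calculus

variable {E F : Type*} [NormedAddCommGroup E] [NormedSpace ℝ E] [NormedAddCommGroup F]
  [NormedSpace ℝ F] {Ω : Set E}

theorem ContDiffOn.contDiff_of_tsupport_subset {n : WithTop ℕ∞} {g : E → F} (hΩ : IsOpen Ω)
    (hg : ContDiffOn ℝ n g Ω) (hgΩ : tsupport g ⊆ Ω) : ContDiff ℝ n g := by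
  refine contDiff_iff_contDiffAt.2 fun x => ?_
  by_cases hx : x ∈ Ω
  · exact hg.contDiffAt (hΩ.mem_nhds hx)
  · exact contDiffAt_const.congr_of_eventuallyEq
      (notMem_tsupport_iff_eventuallyEq.1 fun h => hx (hgΩ h))

theorem ContDiffOn.continuousOn_fderiv_apply {f : E → F} (hf : ContDiffOn ℝ 1 f Ω)
    (hΩ : IsOpen Ω) (v : E) : ContinuousOn (fderiv ℝ f · v) Ω :=
  (hf.continuousOn_fderiv_of_isOpen hΩ le_rfl).clm_apply continuousOn_const

theorem fderiv_fderiv_apply_comm {ψ : E → F} (hψ : ContDiff ℝ 2 ψ) (x v w : E) :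
    fderiv ℝ (fderiv ℝ ψ · w) x v = fderiv ℝ (fderiv ℝ ψ · v) x w := by
  have hd : DifferentiableAt ℝ (fderiv ℝ ψ) x :=
    (hψ.fderiv_right (m := 1) le_rfl).differentiable one_ne_zero x
  rw [fderiv_clm_apply hd (differentiableAt_const w),
    fderiv_clm_apply hd (differentiableAt_const v)]
  simpa using (hψ.contDiffAt.isSymmSndFDerivAt (by simp)).eq v w

end Calculus

section IntegrationByParts

variable {E 𝕜 : Type*} [NormedAddCommGroup E] [NormedSpace ℝ E] [FiniteDimensional ℝ E]
  [MeasurableSpace E] [BorelSpace E] {μ : Measure E} [μ.IsAddHaarMeasure]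
  [NormedField 𝕜] [NormedAlgebra ℝ 𝕜] {Ω : Set E} {f g ψ : E → 𝕜}

/- No cut-off is needed although `f` is only differentiable on `Ω`: the library version asks for
differentiability of each factor only on the support of the other one. -/
theorem integral_mul_fderiv_eq_neg_fderiv_mul_of_contDiffOn (hΩ : IsOpen Ω)
    (hf : ContDiffOn ℝ 1 f Ω) (hg : ContDiffOn ℝ 1 g Ω) (hgc : HasCompactSupport g)
    (hgΩ : tsupport g ⊆ Ω) (v : E) :
    ∫ x, f x * fderiv ℝ g x v ∂μ = -∫ x, fderiv ℝ f x v * g x ∂μ := by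
  have hg' : ContDiff ℝ 1 g := hg.contDiff_of_tsupport_subset hΩ hgΩ
  refine integral_mul_fderiv_eq_neg_fderiv_mul_of_integrable
    (hgc.integrable_mul_left hgΩ (hf.continuousOn_fderiv_apply hΩ v) hg.continuousOn)
    ((hgc.fderiv_apply (𝕜 := ℝ) v).integrable_mul_left
      ((tsupport_fderiv_apply_subset ℝ v).trans hgΩ) hf.continuousOn
      ((hg'.continuous_fderiv one_ne_zero).clm_apply continuous_const).continuousOn)
    (hgc.integrable_mul_left hgΩ hf.continuousOn hg.continuousOn)
    (fun x hx => (hf.differentiableOn one_ne_zero).differentiableAt (hΩ.mem_nhds (hgΩ hx)))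
    (fun x _ => hg'.differentiable one_ne_zero x)

theorem integral_mul_fderiv_eq_neg_fderiv_mul_of_contDiffOn' (hΩ : IsOpen Ω)
    (hf : ContDiffOn ℝ 1 f Ω) (hg : ContDiffOn ℝ 1 g Ω) (hfc : HasCompactSupport f)
    (hfΩ : tsupport f ⊆ Ω) (v : E) :
    ∫ x, f x * fderiv ℝ g x v ∂μ = -∫ x, fderiv ℝ f x v * g x ∂μ := by
  have h := integral_mul_fderiv_eq_neg_fderiv_mul_of_contDiffOn (μ := μ) hΩ hg hf hfc hfΩ v
  simp only [mul_comm (g _), mul_comm (fderiv ℝ g _ v)] at h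
  rw [h, neg_neg]

theorem integral_fderiv_mul_fderiv_comm (hΩ : IsOpen Ω) (hf : ContDiffOn ℝ 1 f Ω)
    (hψ : ContDiff ℝ 2 ψ) (hψc : HasCompactSupport ψ) (hψΩ : tsupport ψ ⊆ Ω) (v w : E) :
    ∫ x, fderiv ℝ f x v * fderiv ℝ ψ x w ∂μ = ∫ x, fderiv ℝ f x w * fderiv ℝ ψ x v ∂μ := by
  have ibp (u u' : E) := integral_mul_fderiv_eq_neg_fderiv_mul_of_contDiffOn (μ := μ) hΩ hf
    ((hψ.fderiv_right (m := 1) le_rfl).clm_apply contDiff_const).contDiffOn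
    (hψc.fderiv_apply (𝕜 := ℝ) u') ((tsupport_fderiv_apply_subset ℝ u').trans hψΩ) u
  calc ∫ x, fderiv ℝ f x v * fderiv ℝ ψ x w ∂μ
      = -∫ x, f x * fderiv ℝ (fderiv ℝ ψ · w) x v ∂μ := by rw [ibp v w, neg_neg]
    _ = -∫ x, f x * fderiv ℝ (fderiv ℝ ψ · v) x w ∂μ := by
      simp_rw [fderiv_fderiv_apply_comm hψ _ v w]
    _ = ∫ x, fderiv ℝ f x w * fderiv ℝ ψ x v ∂μ := by rw [ibp w v, neg_neg]

theorem integral_sum_fderiv_mul_fderiv_sub_comm (hΩ : IsOpen Ω) (hψ : ContDiff ℝ 2 ψ)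
    (hψc : HasCompactSupport ψ) (hψΩ : tsupport ψ ⊆ Ω) {ι : Type*} (s : Finset ι)
    {f : ι → E → 𝕜} (hf : ∀ i ∈ s, ContDiffOn ℝ 1 (f i) Ω) (v w : ι → E) :
    ∫ x, ∑ i ∈ s, (fderiv ℝ (f i) x (v i) * fderiv ℝ ψ x (w i)
      - fderiv ℝ (f i) x (w i) * fderiv ℝ ψ x (v i)) ∂μ = 0 := by
  have hint (i) (hi : i ∈ s) (a b : E) :
      Integrable (fun x => fderiv ℝ (f i) x a * fderiv ℝ ψ x b) μ :=
    (hψc.fderiv_apply (𝕜 := ℝ) b).integrable_mul_left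
      ((tsupport_fderiv_apply_subset ℝ b).trans hψΩ) ((hf i hi).continuousOn_fderiv_apply hΩ a)
      ((hψ.continuous_fderiv two_ne_zero).clm_apply continuous_const).continuousOn
  rw [integral_finsetSum s (f := fun i x => _ - _) fun i hi => (hint i hi _ _).sub (hint i hi _ _)]
  refine Finset.sum_eq_zero fun i hi => ?_
  rw [integral_sub (hint i hi _ _) (hint i hi _ _),
    integral_fderiv_mul_fderiv_comm hΩ (hf i hi) hψ hψc hψΩ, sub_self]

end IntegrationByParts

section VectorCalculus

local notation "ℝ³" => Fin 3 → ℝ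

def vpd3 (k : Fin 3) (F : ℝ³ → Fin 3 → ℂ) (x : ℝ³) : Fin 3 → ℂ :=
  fun j => pd3 k (fun y => F y j) x

variable {Ω : Set ℝ³}

theorem grad3_eq_zero_of_notMem_tsupport {ψ : ℝ³ → ℂ} {x : ℝ³} (hx : x ∉ tsupport ψ) :
    grad3 ψ x = 0 := by
  ext j
  simp [grad3, pd3, fderiv_of_notMem_tsupport ℝ hx]

theorem contDiff_grad3 {ψ : ℝ³ → ℂ} (hψ : ContDiff ℝ 2 ψ) : ContDiff ℝ 1 (grad3 ψ) :=
  contDiff_pi.2 fun _ => (hψ.fderiv_right (m := 1) le_rfl).clm_apply contDiff_const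

theorem tsupport_mulVec_grad3_subset (a : ℝ³ → Matrix (Fin 3) (Fin 3) ℂ) (ψ : ℝ³ → ℂ)
    (j : Fin 3) : tsupport (fun y => (a y *ᵥ grad3 ψ y) j) ⊆ tsupport ψ :=
  closure_minimal (fun y hy => by_contra fun h => hy (by
    simp [grad3_eq_zero_of_notMem_tsupport h])) (isClosed_tsupport ψ)

theorem contDiffOn_mulVec {n : WithTop ℕ∞} {a : ℝ³ → Matrix (Fin 3) (Fin 3) ℂ}
    {v : ℝ³ → Fin 3 → ℂ} (ha : ∀ i j, ContDiffOn ℝ n (fun y => a y i j) Ω)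
    (hv : ContDiffOn ℝ n v Ω) : ContDiffOn ℝ n (fun y => a y *ᵥ v y) Ω :=
  contDiffOn_pi.2 fun i => by
    simpa only [mulVec, dotProduct] using
      ContDiffOn.sum fun j _ => (ha i j).mul (contDiffOn_pi.1 hv j)

theorem vpd3_mulVec {a : ℝ³ → Matrix (Fin 3) (Fin 3) ℂ} {v : ℝ³ → Fin 3 → ℂ} {x : ℝ³}
    (ha : ∀ i j, DifferentiableAt ℝ (fun y => a y i j) x) (hv : DifferentiableAt ℝ v x)
    (k : Fin 3) :
    vpd3 k (fun y => a y *ᵥ v y) x = mpd3 k a x *ᵥ v x + a x *ᵥ vpd3 k v x := by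
  ext i
  simp only [vpd3, mpd3, pd3, mulVec, dotProduct, Pi.add_apply, of_apply]
  rw [fderiv_fun_sum (A := fun j y => a y i j * v y j)
    fun j _ => (ha i j).fun_mul (differentiableAt_pi.1 hv j), ← Finset.sum_add_distrib]
  simp [fderiv_fun_mul (ha i _) (differentiableAt_pi.1 hv _), add_comm, mul_comm]

theorem vdiv_smul_add {F G : ℝ³ → Fin 3 → ℂ} {x : ℝ³} (hF : DifferentiableAt ℝ F x)
    (hG : DifferentiableAt ℝ G x) (c : ℂ) :
    vdiv (fun y => c • F y + G y) x = c * vdiv F x + vdiv G x := by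
  simp only [vdiv, pd3, Pi.add_apply, Pi.smul_apply, smul_eq_mul, Finset.mul_sum,
    ← Finset.sum_add_distrib]
  refine Finset.sum_congr rfl fun j _ => ?_
  have hFj := differentiableAt_pi.1 hF j
  rw [fderiv_fun_add (hFj.const_mul c) (differentiableAt_pi.1 hG j), fderiv_const_mul hFj]
  simp

theorem grad3_eq_vpd3_add_cross3_vcurl (F : ℝ³ → Fin 3 → ℂ) (x : ℝ³) (k : Fin 3) :
    grad3 (fun y => F y k) x = vpd3 k F x + cross3 (e3 k) (vcurl F x) := by
  ext i
  fin_cases k <;> fin_cases i <;> simp [grad3, vpd3, cross3, e3, vcurl]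

theorem grad3_dotProduct_transpose_mulVec {ε : ℝ³ → Matrix (Fin 3) (Fin 3) ℂ}
    {E : ℝ³ → Fin 3 → ℂ} {x : ℝ³} (hε : ∀ i j, DifferentiableAt ℝ (fun y => ε y i j) x)
    (hE : DifferentiableAt ℝ E x) (k : Fin 3) (v : Fin 3 → ℂ) :
    grad3 (fun y => E y k) x ⬝ᵥ ((ε x)ᵀ *ᵥ v) =
      (vpd3 k (fun y => ε y *ᵥ E y) x - mpd3 k ε x *ᵥ E x
        + ε x *ᵥ cross3 (e3 k) (vcurl E x)) ⬝ᵥ v := by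
  rw [dotProduct_transpose_mulVec, dotProduct_comm, grad3_eq_vpd3_add_cross3_vcurl,
    vpd3_mulVec hε hE, mulVec_add]
  abel_nf

end VectorCalculus

section VectorIntegrals

local notation "ℝ³" => Fin 3 → ℝ

variable {Ω : Set ℝ³}

theorem integrable_dotProduct {V W : ℝ³ → Fin 3 → ℂ} (hV : ∀ j, ContinuousOn (V · j) Ω)
    (hW : ∀ j, ContinuousOn (W · j) Ω) (hWc : ∀ j, HasCompactSupport (W · j))
    (hWΩ : ∀ j, tsupport (W · j) ⊆ Ω) : Integrable (fun x => V x ⬝ᵥ W x) :=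
  integrable_finsetSum _ fun j _ => (hWc j).integrable_mul_left (hWΩ j) (hV j) (hW j)

theorem integral_mul_vdiv (hΩ : IsOpen Ω) {f : ℝ³ → ℂ} {G : ℝ³ → Fin 3 → ℂ}
    (hf : ContDiffOn ℝ 1 f Ω) (hG : ContDiffOn ℝ 1 G Ω) (hGc : ∀ j, HasCompactSupport (G · j))
    (hGΩ : ∀ j, tsupport (G · j) ⊆ Ω) :
    ∫ x, f x * vdiv G x = -∫ x, grad3 f x ⬝ᵥ G x := by
  have hGj := contDiffOn_pi.1 hG
  have hint₁ (j : Fin 3) : Integrable (fun x => f x * pd3 j (G · j) x) :=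
    ((hGc j).fderiv_apply (𝕜 := ℝ) _).integrable_mul_left
      ((tsupport_fderiv_apply_subset ℝ _).trans (hGΩ j)) hf.continuousOn
      ((hGj j).continuousOn_fderiv_apply hΩ _)
  have hint₂ (j : Fin 3) : Integrable (fun x => pd3 j f x * G x j) :=
    (hGc j).integrable_mul_left (hGΩ j) (hf.continuousOn_fderiv_apply hΩ _) (hGj j).continuousOn
  simp only [vdiv, Finset.mul_sum, dotProduct, grad3]
  rw [integral_finsetSum _ fun j _ => hint₁ j, integral_finsetSum _ fun j _ => hint₂ j,
    ← Finset.sum_neg_distrib]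
  exact Finset.sum_congr rfl fun j _ =>
    integral_mul_fderiv_eq_neg_fderiv_mul_of_contDiffOn hΩ hf (hGj j) (hGc j) (hGΩ j) _

theorem integral_mul_vdiv' (hΩ : IsOpen Ω) {f : ℝ³ → ℂ} {G : ℝ³ → Fin 3 → ℂ}
    (hf : ContDiffOn ℝ 1 f Ω) (hG : ContDiffOn ℝ 1 G Ω) (hfc : HasCompactSupport f)
    (hfΩ : tsupport f ⊆ Ω) :
    ∫ x, f x * vdiv G x = -∫ x, grad3 f x ⬝ᵥ G x := by
  have hGj := contDiffOn_pi.1 hG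
  have hint₁ (j : Fin 3) : Integrable (fun x => f x * pd3 j (G · j) x) :=
    hfc.integrable_mul_right hfΩ hf.continuousOn ((hGj j).continuousOn_fderiv_apply hΩ _)
  have hint₂ (j : Fin 3) : Integrable (fun x => pd3 j f x * G x j) :=
    (hfc.fderiv_apply (𝕜 := ℝ) _).integrable_mul_right
      ((tsupport_fderiv_apply_subset ℝ _).trans hfΩ) (hf.continuousOn_fderiv_apply hΩ _)
      (hGj j).continuousOn
  simp only [vdiv, Finset.mul_sum, dotProduct, grad3]
  rw [integral_finsetSum _ fun j _ => hint₁ j, integral_finsetSum _ fun j _ => hint₂ j,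
    ← Finset.sum_neg_distrib]
  exact Finset.sum_congr rfl fun j _ =>
    integral_mul_fderiv_eq_neg_fderiv_mul_of_contDiffOn' hΩ hf (hGj j) hfc hfΩ _

/- `∇u · curl H` is the sum over `i : Fin 3` of `∂_{i+1} H_{i+2} ∂_i u - ∂_i H_{i+2} ∂_{i+1} u`. -/
theorem integral_grad3_dotProduct_vcurl (hΩ : IsOpen Ω) {u : ℝ³ → ℂ} (hu : ContDiff ℝ 2 u)
    (huc : HasCompactSupport u) (huΩ : tsupport u ⊆ Ω) {H : ℝ³ → Fin 3 → ℂ}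
    (hH : ContDiffOn ℝ 1 H Ω) : ∫ x, grad3 u x ⬝ᵥ vcurl H x = 0 := by
  rw [← integral_sum_fderiv_mul_fderiv_sub_comm (μ := volume) hΩ hu huc huΩ Finset.univ
    (f := fun i y => H y (i + 2)) (fun i _ => contDiffOn_pi.1 hH _)
    (fun i => Pi.single (i + 1) 1) (fun i => Pi.single i 1)]
  congr 1
  ext x
  simp only [dotProduct, grad3, pd3, vcurl, Fin.isValue, Fin.sum_univ_three, cons_val_zero,
    cons_val_one, cons_val, Finset.sum_sub_distrib, Fin.reduceAdd]
  ring

theorem ae_vdiv_eq_zero_of_eq_vcurl (hΩ : IsOpen Ω) {F H : ℝ³ → Fin 3 → ℂ}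
    (hF : ContDiffOn ℝ 1 F Ω) (hH : ContDiffOn ℝ 1 H Ω) (hFH : ∀ x ∈ Ω, F x = vcurl H x) :
    ∀ᵐ x, x ∈ Ω → vdiv F x = 0 := by
  refine hΩ.ae_eq_zero_of_integral_contDiff_smul_eq_zero
    ((continuousOn_finsetSum _ fun j _ => (contDiffOn_pi.1 hF j).continuousOn_fderiv_apply hΩ _)
      |>.locallyIntegrableOn hΩ.measurableSet) fun g hg hgc hgΩ => ?_
  set u : ℝ³ → ℂ := fun x => (g x : ℂ)
  have hu : ContDiff ℝ 2 u :=
    Complex.ofRealCLM.contDiff.comp (hg.of_le (WithTop.coe_le_coe.2 le_top))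
  have huc : HasCompactSupport u := hgc.comp_left Complex.ofReal_zero
  have huΩ : tsupport u ⊆ Ω := (tsupport_comp_subset Complex.ofReal_zero g).trans hgΩ
  calc ∫ x, g x • vdiv F x = ∫ x, u x * vdiv F x := by simp [u, Complex.real_smul]
    _ = -∫ x, grad3 u x ⬝ᵥ F x := integral_mul_vdiv' hΩ (hu.of_le one_le_two).contDiffOn hF huc huΩ
    _ = -∫ x, grad3 u x ⬝ᵥ vcurl H x := by
      congr 1
      refine integral_congr_ae (ae_of_all _ fun x => ?_)
      by_cases hx : x ∈ Ω
      · dsimp only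
        rw [hFH x hx]
      · simp [grad3_eq_zero_of_notMem_tsupport fun h => hx (huΩ h)]
    _ = 0 := by rw [integral_grad3_dotProduct_vcurl hΩ hu huc huΩ hH, neg_zero]

theorem integral_vpd3_dotProduct_grad3_sub_vdiv_mul (hΩ : IsOpen Ω) {ψ : ℝ³ → ℂ}
    (hψ : ContDiff ℝ 2 ψ) (hψc : HasCompactSupport ψ) (hψΩ : tsupport ψ ⊆ Ω)
    {F : ℝ³ → Fin 3 → ℂ} (hF : ContDiffOn ℝ 1 F Ω) (k : Fin 3) :
    ∫ x, (vpd3 k F x ⬝ᵥ grad3 ψ x - vdiv F x * pd3 k ψ x) = 0 := by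
  rw [← integral_sum_fderiv_mul_fderiv_sub_comm (μ := volume) hΩ hψ hψc hψΩ Finset.univ
    (fun j _ => contDiffOn_pi.1 hF j) (fun _ => Pi.single k 1) (fun j => Pi.single j 1)]
  congr 1
  ext x
  simp [dotProduct, vpd3, vdiv, grad3, pd3, Finset.sum_mul]

theorem integral_mul_vdiv_transpose_mulVec_grad3 (hΩ : IsOpen Ω) {ψ : ℝ³ → ℂ}
    (hψ : ContDiff ℝ 2 ψ) (hψc : HasCompactSupport ψ) (hψΩ : tsupport ψ ⊆ Ω)
    {ε : ℝ³ → Matrix (Fin 3) (Fin 3) ℂ} {E : ℝ³ → Fin 3 → ℂ}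
    (hε : ∀ i j, ContDiffOn ℝ 1 (fun x => ε x i j) Ω) (hE : ContDiffOn ℝ 1 E Ω) (k : Fin 3) :
    ∫ x, E x k * vdiv (fun y => (ε y)ᵀ *ᵥ grad3 ψ y) x =
      ∫ x, (mpd3 k ε x *ᵥ E x - ε x *ᵥ cross3 (e3 k) (vcurl E x)
        - vdiv (fun y => ε y *ᵥ E y) x • e3 k) ⬝ᵥ grad3 ψ x := by
  set G : ℝ³ → Fin 3 → ℂ := fun y => (ε y)ᵀ *ᵥ grad3 ψ y
  set F : ℝ³ → Fin 3 → ℂ := fun y => ε y *ᵥ E y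
  have hF : ContDiffOn ℝ 1 F Ω := contDiffOn_mulVec hε hE
  have hG : ContDiffOn ℝ 1 G Ω :=
    contDiffOn_mulVec (fun i j => hε j i) (contDiff_grad3 hψ).contDiffOn
  have hGψ (j : Fin 3) : tsupport (G · j) ⊆ tsupport ψ := tsupport_mulVec_grad3_subset _ ψ j
  have hGc (j : Fin 3) : HasCompactSupport (G · j) :=
    hψc.mono' ((subset_tsupport _).trans (hGψ j))
  have hpt (x : ℝ³) : (mpd3 k ε x *ᵥ E x - ε x *ᵥ cross3 (e3 k) (vcurl E x)
        - vdiv F x • e3 k) ⬝ᵥ grad3 ψ x =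
      (vpd3 k F x ⬝ᵥ grad3 ψ x - vdiv F x * pd3 k ψ x) - grad3 (E · k) x ⬝ᵥ G x := by
    by_cases hx : x ∈ Ω
    · have hdiff {V : Type} [NormedAddCommGroup V] [NormedSpace ℝ V] {f : ℝ³ → V}
          (hf : ContDiffOn ℝ 1 f Ω) : DifferentiableAt ℝ f x :=
        (hf.differentiableOn one_ne_zero).differentiableAt (hΩ.mem_nhds hx)
      rw [grad3_dotProduct_transpose_mulVec (fun i j => hdiff (hε i j)) (hdiff hE)]
      simp only [sub_dotProduct, add_dotProduct, smul_dotProduct, e3, single_dotProduct, grad3,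
        one_mul, smul_eq_mul]
      ring
    · have h0 := grad3_eq_zero_of_notMem_tsupport fun h => hx (hψΩ h)
      simp [G, h0, show pd3 k ψ x = 0 from congrFun h0 k]
  have hψ' (j : Fin 3) : ContinuousOn (pd3 j ψ) Ω :=
    ((hψ.continuous_fderiv two_ne_zero).clm_apply continuous_const).continuousOn
  have hψ'c (j : Fin 3) : HasCompactSupport (pd3 j ψ) := hψc.fderiv_apply (𝕜 := ℝ) _
  have hψ'Ω (j : Fin 3) : tsupport (pd3 j ψ) ⊆ Ω := (tsupport_fderiv_apply_subset ℝ _).trans hψΩ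
  have hF' (j : Fin 3) : ContinuousOn (fun x => pd3 k (F · j) x) Ω :=
    (contDiffOn_pi.1 hF j).continuousOn_fderiv_apply hΩ _
  have hdivF : ContinuousOn (vdiv F) Ω :=
    continuousOn_finsetSum _ fun j _ => (contDiffOn_pi.1 hF j).continuousOn_fderiv_apply hΩ _
  have hint₁ : Integrable (fun x => vpd3 k F x ⬝ᵥ grad3 ψ x - vdiv F x * pd3 k ψ x) :=
    (integrable_dotProduct hF' hψ' hψ'c hψ'Ω).sub
      ((hψ'c k).integrable_mul_left (hψ'Ω k) hdivF (hψ' k))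
  have hint₂ : Integrable (fun x => grad3 (E · k) x ⬝ᵥ G x) :=
    integrable_dotProduct (fun _ => (contDiffOn_pi.1 hE k).continuousOn_fderiv_apply hΩ _)
      (fun j => (contDiffOn_pi.1 hG j).continuousOn) hGc fun j => (hGψ j).trans hψΩ
  rw [integral_mul_vdiv hΩ (contDiffOn_pi.1 hE k) hG hGc fun j => (hGψ j).trans hψΩ,
    integral_congr_ae (ae_of_all _ hpt), integral_sub hint₁ hint₂,
    integral_vpd3_dotProduct_grad3_sub_vdiv_mul hΩ hψ hψc hψΩ hF, zero_sub]

theorem ae_vdiv_mulVec_eq_of_vcurl_eq (hΩ : IsOpen Ω) {ω : ℂ} (hω : ω ≠ 0)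
    {ε : ℝ³ → Matrix (Fin 3) (Fin 3) ℂ} {E H Je : ℝ³ → Fin 3 → ℂ}
    (hε : ∀ i j, ContDiffOn ℝ 1 (fun x => ε x i j) Ω) (hE : ContDiffOn ℝ 1 E Ω)
    (hH : ContDiffOn ℝ 1 H Ω) (hJe : ContDiffOn ℝ 1 Je Ω)
    (hM : ∀ x ∈ Ω, vcurl H x = (Complex.I * ω) • (ε x *ᵥ E x) + Je x) :
    ∀ᵐ x, x ∈ Ω → vdiv (fun y => ε y *ᵥ E y) x = (Complex.I / ω) * vdiv Je x := by
  have hF := contDiffOn_mulVec hε hE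
  filter_upwards [ae_vdiv_eq_zero_of_eq_vcurl hΩ ((hF.const_smul (Complex.I * ω)).add hJe) hH
    fun x hx => (hM x hx).symm] with x hx hxΩ
  have hdiff {f : ℝ³ → Fin 3 → ℂ} (hf : ContDiffOn ℝ 1 f Ω) : DifferentiableAt ℝ f x :=
    (hf.differentiableOn one_ne_zero).differentiableAt (hΩ.mem_nhds hxΩ)
  rw [vdiv_smul_add (hdiff hF) (hdiff hJe)] at hx
  field_simp
  linear_combination (-Complex.I) * hx hxΩ + (ω * vdiv (fun y => ε y *ᵥ E y) x) * Complex.I_sq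

end VectorIntegrals

theorem stmt_2_general
    (Ω : Set (Fin 3 → ℝ)) (hΩ : IsOpen Ω) (ω : ℂ) (hω : ω ≠ 0)
    (ε μ : (Fin 3 → ℝ) → Matrix (Fin 3) (Fin 3) ℂ)
    (E H Je Jm : (Fin 3 → ℝ) → Fin 3 → ℂ)
    (hε : ∀ i j, ContDiffOn ℝ 1 (fun x => ε x i j) Ω)
    (hE : ContDiffOn ℝ 1 E Ω) (hH : ContDiffOn ℝ 1 H Ω)
    (hJe : ContDiffOn ℝ 1 Je Ω)
    (hM1 : ∀ x ∈ Ω, vcurl H x = (Complex.I * ω) • (ε x *ᵥ E x) + Je x)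
    (hM2 : ∀ x ∈ Ω, vcurl E x = -((Complex.I * ω) • (μ x *ᵥ H x)) + Jm x) :
    ∀ k : Fin 3, ∀ φ : (Fin 3 → ℝ) → ℂ,
      ContDiff ℝ 2 φ → HasCompactSupport φ → tsupport φ ⊆ Ω →
      ∫ x in Ω, E x k *
          vdiv (fun y => (ε y)ᵀ *ᵥ grad3 (fun z => (starRingEnd ℂ) (φ z)) y) x
        = ∫ x in Ω,
            (mpd3 k ε x *ᵥ E x
              - ε x *ᵥ cross3 (e3 k) (Jm x - (Complex.I * ω) • (μ x *ᵥ H x))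
              - ((Complex.I / ω) * vdiv Je x) • e3 k)
            ⬝ᵥ grad3 (fun z => (starRingEnd ℂ) (φ z)) x := by
  intro k φ hφ hφc hφΩ
  set ψ : (Fin 3 → ℝ) → ℂ := fun z => (starRingEnd ℂ) (φ z)
  have hψ : ContDiff ℝ 2 ψ := Complex.conjCLE.contDiff.comp hφ
  have hψc : HasCompactSupport ψ := hφc.comp_left (map_zero _)
  have hψΩ : tsupport ψ ⊆ Ω := (tsupport_comp_subset (map_zero _) φ).trans hφΩ
  have hlhs (x) (hx : x ∉ Ω) : E x k * vdiv (fun y => (ε y)ᵀ *ᵥ grad3 ψ y) x = 0 := by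
    simp [vdiv, pd3, fderiv_of_notMem_tsupport ℝ fun h =>
      hx (hψΩ (tsupport_mulVec_grad3_subset _ ψ _ h))]
  have hrhs (x) (hx : x ∉ Ω) : grad3 ψ x = 0 :=
    grad3_eq_zero_of_notMem_tsupport fun h => hx (hψΩ h)
  rw [setIntegral_eq_integral_of_forall_compl_eq_zero hlhs,
    setIntegral_eq_integral_of_forall_compl_eq_zero fun x hx => by rw [hrhs x hx, dotProduct_zero],
    integral_mul_vdiv_transpose_mulVec_grad3 hΩ hψ hψc hψΩ hε hE]
  refine integral_congr_ae ?_
  filter_upwards [ae_vdiv_mulVec_eq_of_vcurl_eq hΩ hω hε hE hH hJe hM1] with x hx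
  by_cases hxΩ : x ∈ Ω
  · rw [hx hxΩ, hM2 x hxΩ, neg_add_eq_sub]
  · rw [hrhs x hxΩ, dotProduct_zero, dotProduct_zero]

/-- Interior very weak identity (2.2) for the components of the electric field, tested against
compactly supported C² test functions. -/
theorem stmt_2
    (Ω : Set (Fin 3 → ℝ)) (hΩ : IsOpen Ω) (ω : ℂ) (hω : ω ≠ 0)
    (ε μ : (Fin 3 → ℝ) → Matrix (Fin 3) (Fin 3) ℂ)
    (E H Je Jm : (Fin 3 → ℝ) → Fin 3 → ℂ)
    (hε : ∀ i j, ContDiffOn ℝ 1 (fun x => ε x i j) Ω)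
    (hμ : ∀ i j, ContDiffOn ℝ 1 (fun x => μ x i j) Ω)
    (hE : ContDiffOn ℝ 1 E Ω) (hH : ContDiffOn ℝ 1 H Ω)
    (hJe : ContDiffOn ℝ 1 Je Ω) (hJm : ContinuousOn Jm Ω)
    (hM1 : ∀ x ∈ Ω, vcurl H x = (Complex.I * ω) • (ε x *ᵥ E x) + Je x)
    (hM2 : ∀ x ∈ Ω, vcurl E x = -((Complex.I * ω) • (μ x *ᵥ H x)) + Jm x) :
    ∀ k : Fin 3, ∀ φ : (Fin 3 → ℝ) → ℂ,
      ContDiff ℝ 2 φ → HasCompactSupport φ → tsupport φ ⊆ Ω →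
      ∫ x in Ω, E x k *
          vdiv (fun y => (ε y)ᵀ *ᵥ grad3 (fun z => (starRingEnd ℂ) (φ z)) y) x
        = ∫ x in Ω,
            (mpd3 k ε x *ᵥ E x
              - ε x *ᵥ cross3 (e3 k) (Jm x - (Complex.I * ω) • (μ x *ᵥ H x))
              - ((Complex.I / ω) * vdiv Je x) • e3 k)
            ⬝ᵥ grad3 (fun z => (starRingEnd ℂ) (φ z)) x :=
  stmt_2_general Ω hΩ ω hω ε μ E H Je Jm hε hE hH hJe hM1 hM2
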